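/- Assume additionally that 3(v3 − v0)/(2λμ) → 0 and 3(v3 + v0)/(2λμ) → 0 as t → ∞. Let (a0, a+, a−, φ) be a solution of the Stenzel monopole ODE system on [t*, ∞) with a0(t*) > 0, a+(t*) > 0, a−(t*) > 0. If φ(t*) > 0 and φ'(t*) > 0 then a− is unbounded on [t*, ∞); if instead φ(t*) < 0 and φ'(t*) < 0 then a+ is unbounded on [t*, ∞). -/

import Mathlib

open Set Filter

/-- The hypotheses on the functions `λ, μ, v0, v3` encoding the Stenzel Calabi–Yau
structure on `T*S³`: they are C¹ on `(0,∞)`, satisfy `λ > 0`, `μ > 0`, `v3 − v0 > 0`,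
`v3 + v0 > 0`, `v0 < 0`, `μ² = v3² − v0²`, and the hypo-evolution equations
`μ' = 2λ`, `(μλ)' = 3v3`, `(λv3)' = 3μ`, `(λv0)' = 0`. -/
def StenzelHypo (lam mu v0 v3 : ℝ → ℝ) : Prop :=
  ContDiffOn ℝ 1 lam (Ioi 0) ∧ ContDiffOn ℝ 1 mu (Ioi 0) ∧
  ContDiffOn ℝ 1 v0 (Ioi 0) ∧ ContDiffOn ℝ 1 v3 (Ioi 0) ∧
  (∀ t ∈ Ioi (0 : ℝ), 0 < lam t ∧ 0 < mu t ∧ 0 < v3 t - v0 t ∧ 0 < v3 t + v0 t ∧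
    v0 t < 0 ∧ mu t ^ 2 = v3 t ^ 2 - v0 t ^ 2) ∧
  (∀ t ∈ Ioi (0 : ℝ),
    HasDerivAt mu (2 * lam t) t ∧
    HasDerivAt (fun s => mu s * lam s) (3 * v3 t) t ∧
    HasDerivAt (fun s => lam s * v3 s) (3 * mu t) t ∧
    HasDerivAt (fun s => lam s * v0 s) 0 t)

/-- A solution of the Stenzel monopole ODE system:
`a0' = (4λ/μ)(a₊a₋ − a0)`,
`a₊' = (3(v3 + v0)/(2λμ))(a0a₋ − a₊) − 2a₊φ`,
`a₋' = (3(v3 − v0)/(2λμ))(a0a₊ − a₋) + 2a₋φ`,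
`φ' = (3/μ²)(((a₊² + a₋²)/2 − 1)v0 − ((a₊² − a₋²)/2)v3)`. -/
def IsSolStenzelMonopole (lam mu v0 v3 a0 ap am phi : ℝ → ℝ) (s : Set ℝ) : Prop :=
  ∀ t ∈ s,
    HasDerivAt a0 (4 * lam t / mu t * (ap t * am t - a0 t)) t ∧
    HasDerivAt ap (3 * (v3 t + v0 t) / (2 * lam t * mu t) * (a0 t * am t - ap t)
      - 2 * ap t * phi t) t ∧
    HasDerivAt am (3 * (v3 t - v0 t) / (2 * lam t * mu t) * (a0 t * ap t - am t)
      + 2 * am t * phi t) t ∧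
    HasDerivAt phi (3 / mu t ^ 2 * (((ap t ^ 2 + am t ^ 2) / 2 - 1) * v0 t
      - (ap t ^ 2 - am t ^ 2) / 2 * v3 t)) t

/-- Assume additionally that `3(v3 − v0)/(2λμ) → 0` and `3(v3 + v0)/(2λμ) → 0` as
`t → ∞`.  For a solution of the Stenzel monopole ODE system on `[t*, ∞)` with
`a0(t*) > 0`, `a₊(t*) > 0`, `a₋(t*) > 0`: if `φ(t*) > 0` and `φ'(t*) > 0` then `a₋` is
unbounded on `[t*, ∞)`; if instead `φ(t*) < 0` and `φ'(t*) < 0` then `a₊` is unbounded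
on `[t*, ∞)`. -/
lemma key_mono {x xd : ℝ → ℝ} {a b C : ℝ} (hab : a ≤ b)
    (hx : ∀ t ∈ Icc a b, HasDerivAt x (xd t) t)
    (hkey : ∀ t ∈ Ioo a b, 0 ≤ C * x t + xd t) :
    Real.exp (C * a) * x a ≤ Real.exp (C * b) * x b := by
  have hG : ∀ t ∈ Icc a b, HasDerivAt (fun s => Real.exp (C * s) * x s)
      (Real.exp (C * t) * C * x t + Real.exp (C * t) * xd t) t := by
    intro t ht
    have h1 : HasDerivAt (fun s => Real.exp (C * s)) (Real.exp (C * t) * C) t := by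
      simpa using ((hasDerivAt_id t).const_mul C).exp
    exact h1.mul (hx t ht)
  have hmono : MonotoneOn (fun s => Real.exp (C * s) * x s) (Icc a b) := by
    apply monotoneOn_of_deriv_nonneg (convex_Icc a b)
    · exact fun t ht => (hG t ht).continuousAt.continuousWithinAt
    · intro t ht
      rw [interior_Icc] at ht
      exact (hG t (Ioo_subset_Icc_self ht)).differentiableAt.differentiableWithinAt
    · intro t ht
      rw [interior_Icc] at ht
      rw [(hG t (Ioo_subset_Icc_self ht)).deriv]
      nlinarith [Real.exp_pos (C * t), hkey t ht]
  exact hmono (left_mem_Icc.2 hab) (right_mem_Icc.2 hab) hab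

lemma hg_aux {lam mu v0 v3 a0 ap am phi : ℝ → ℝ} {t : ℝ}
    (hl : 0 < lam t) (hmu : 0 < mu t)
    (hsq : mu t^2 = v3 t^2 - v0 t^2)
    (hap : HasDerivAt ap (3*(v3 t + v0 t)/(2*lam t*mu t)*(a0 t*am t - ap t) - 2*ap t*phi t) t)
    (ham : HasDerivAt am (3*(v3 t - v0 t)/(2*lam t*mu t)*(a0 t*ap t - am t) + 2*am t*phi t) t)
    (h3 : HasDerivAt (fun s => lam s * v3 s) (3*mu t) t)
    (h0' : HasDerivAt (fun s => lam s * v0 s) 0 t) :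
    HasDerivAt (fun s => 3*(((ap s^2 + am s^2)/2 - 1)*(lam s*v0 s) - (ap s^2 - am s^2)/2*(lam s*v3 s)))
      (6*lam t*phi t*(ap t^2*(v3 t - v0 t) + am t^2*(v3 t + v0 t))) t := by
  have H := ((((((hap.pow 2).add (ham.pow 2)).div_const 2).sub_const 1).mul h0').sub
      ((((hap.pow 2).sub (ham.pow 2)).div_const 2).mul h3)).const_mul 3
  refine H.congr_deriv ?_
  symm
  have hm' : mu t ≠ 0 := hmu.ne'
  have hl' : lam t ≠ 0 := hl.ne'
  simp only [Pi.pow_apply, Pi.add_apply, Pi.sub_apply, Nat.cast_ofNat]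
  field_simp
  ring_nf
  linear_combination (9 * (ap t^2 - am t^2)) * hsq

set_option maxHeartbeats 1000000 in
lemma blowup_aux (lam mu v0 v3 a0 ap am phi : ℝ → ℝ)
    (hclam : ContinuousOn lam (Ioi 0)) (hcmu : ContinuousOn mu (Ioi 0))
    (hcv0 : ContinuousOn v0 (Ioi 0)) (hcv3 : ContinuousOn v3 (Ioi 0))
    (hpos : ∀ t ∈ Ioi (0:ℝ), 0 < lam t ∧ 0 < mu t ∧ 0 < v3 t - v0 t ∧ 0 < v3 t + v0 t)
    (hsq : ∀ t ∈ Ioi (0:ℝ), mu t ^ 2 = v3 t ^ 2 - v0 t ^ 2)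
    (hder3 : ∀ t ∈ Ioi (0:ℝ), HasDerivAt (fun s => lam s * v3 s) (3 * mu t) t)
    (hder0 : ∀ t ∈ Ioi (0:ℝ), HasDerivAt (fun s => lam s * v0 s) 0 t)
    (hdecm : Tendsto (fun t => 3 * (v3 t - v0 t) / (2 * lam t * mu t)) atTop (nhds 0))
    (tstar : ℝ) (hts : 0 < tstar)
    (hsol0 : ∀ t ∈ Ici tstar, HasDerivAt a0 (4 * lam t / mu t * (ap t * am t - a0 t)) t)
    (hsolp : ∀ t ∈ Ici tstar, HasDerivAt ap (3 * (v3 t + v0 t) / (2 * lam t * mu t) * (a0 t * am t - ap t) - 2 * ap t * phi t) t)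
    (hsolm : ∀ t ∈ Ici tstar, HasDerivAt am (3 * (v3 t - v0 t) / (2 * lam t * mu t) * (a0 t * ap t - am t) + 2 * am t * phi t) t)
    (hsolphi : ∀ t ∈ Ici tstar, HasDerivAt phi (3 / mu t ^ 2 * (((ap t ^ 2 + am t ^ 2) / 2 - 1) * v0 t - (ap t ^ 2 - am t ^ 2) / 2 * v3 t)) t)
    (h0 : 0 < a0 tstar) (hp : 0 < ap tstar) (hm : 0 < am tstar)
    (hph : 0 < phi tstar) (hph' : 0 < deriv phi tstar) :
    ¬ ∃ M : ℝ, ∀ t ∈ Ici tstar, am t ≤ M := by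
  rintro ⟨M, hM⟩
  have hIoi : Ici tstar ⊆ Ioi (0:ℝ) := fun t ht => lt_of_lt_of_le hts ht
  -- continuity of the solution functions on Ici tstar
  have hcphi : ContinuousOn phi (Ici tstar) :=
    fun t ht => (hsolphi t ht).continuousAt.continuousWithinAt
  -- the coefficient bound function
  set F : ℝ → ℝ := fun t => 4 * lam t / mu t + 3 * (v3 t + v0 t) / (2 * lam t * mu t)
      + 3 * (v3 t - v0 t) / (2 * lam t * mu t) + 2 * |phi t| with hFdef
  have hFcont : ContinuousOn F (Ici tstar) := by
    have h1 : ContinuousOn lam (Ici tstar) := hclam.mono hIoi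
    have h2 : ContinuousOn mu (Ici tstar) := hcmu.mono hIoi
    have h3 : ContinuousOn v0 (Ici tstar) := hcv0.mono hIoi
    have h4 : ContinuousOn v3 (Ici tstar) := hcv3.mono hIoi
    have hmne : ∀ t ∈ Ici tstar, mu t ≠ 0 := fun t ht => (hpos t (hIoi ht)).2.1.ne'
    have hlmne : ∀ t ∈ Ici tstar, 2 * lam t * mu t ≠ 0 := fun t ht => by
      have := (hpos t (hIoi ht)).1
      have := (hpos t (hIoi ht)).2.1
      positivity
    exact ((((continuousOn_const.mul h1).div h2 hmne).add
      (((continuousOn_const.mul (h4.add h3))).div ((continuousOn_const.mul h1).mul h2) hlmne)).add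
      (((continuousOn_const.mul (h4.sub h3))).div ((continuousOn_const.mul h1).mul h2) hlmne)).add
      (continuousOn_const.mul hcphi.abs)
  -- positivity of the solution
  have hpos3 : ∀ t ∈ Ici tstar, 0 < a0 t ∧ 0 < ap t ∧ 0 < am t := by
    set S : Set ℝ := (Ici tstar ∩ a0 ⁻¹' Iic 0) ∪ (Ici tstar ∩ ap ⁻¹' Iic 0) ∪
      (Ici tstar ∩ am ⁻¹' Iic 0) with hSdef
    have hSmem : ∀ s, s ∈ S ↔ s ∈ Ici tstar ∧ (a0 s ≤ 0 ∨ ap s ≤ 0 ∨ am s ≤ 0) := by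
      intro s
      simp only [hSdef, mem_union, mem_inter_iff, mem_preimage, mem_Iic]
      tauto
    have hSclosed : IsClosed S := by
      have hc0 : ContinuousOn a0 (Ici tstar) := fun t ht => (hsol0 t ht).continuousAt.continuousWithinAt
      have hcp : ContinuousOn ap (Ici tstar) := fun t ht => (hsolp t ht).continuousAt.continuousWithinAt
      have hcm : ContinuousOn am (Ici tstar) := fun t ht => (hsolm t ht).continuousAt.continuousWithinAt
      exact ((hc0.preimage_isClosed_of_isClosed isClosed_Ici isClosed_Iic).union
        (hcp.preimage_isClosed_of_isClosed isClosed_Ici isClosed_Iic)).union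
        (hcm.preimage_isClosed_of_isClosed isClosed_Ici isClosed_Iic)
    intro t ht
    by_contra hcon
    have htS : t ∈ S := (hSmem t).2 ⟨ht, by
      rcases le_or_gt (a0 t) 0 with h1 | h1
      · exact Or.inl h1
      rcases le_or_gt (ap t) 0 with h2 | h2
      · exact Or.inr (Or.inl h2)
      rcases le_or_gt (am t) 0 with h3 | h3
      · exact Or.inr (Or.inr h3)
      exact absurd ⟨h1, h2, h3⟩ hcon⟩
    have hSne : S.Nonempty := ⟨t, htS⟩
    have hbdd : BddBelow S := ⟨tstar, fun s hs => ((hSmem s).1 hs).1⟩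
    set t₁ := sInf S with ht₁def
    have ht₁S : t₁ ∈ S := hSclosed.csInf_mem hSne hbdd
    have ht₁mem := (hSmem t₁).1 ht₁S
    have hts1 : tstar ≤ t₁ := le_csInf hSne (fun s hs => ((hSmem s).1 hs).1)
    have htlt : tstar < t₁ := by
      rcases eq_or_lt_of_le hts1 with he | h
      · exfalso
        rcases ht₁mem.2 with h' | h' | h' <;> rw [← he] at h' <;> linarith
      · exact h
    -- bound C
    obtain ⟨tC, htC, hCmax⟩ := isCompact_Icc.exists_isMaxOn (nonempty_Icc.2 hts1)
      (hFcont.mono (fun s (hs : s ∈ Icc tstar t₁) => mem_Ici.2 hs.1))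
    set C := F tC with hCdef
    have hC : ∀ s ∈ Icc tstar t₁, F s ≤ C := fun s hs => hCmax hs
    have hIcc : Icc tstar t₁ ⊆ Ici tstar := fun s hs => hs.1
    -- interior positivity
    have hmid : ∀ s ∈ Ioo tstar t₁, 0 < a0 s ∧ 0 < ap s ∧ 0 < am s := by
      intro s hs
      by_contra h
      push_neg at h
      have hsS : s ∈ S := (hSmem s).2 ⟨mem_Ici.2 hs.1.le, by
        rcases lt_or_ge 0 (a0 s) with h1 | h1
        · rcases lt_or_ge 0 (ap s) with h2 | h2
          · exact Or.inr (Or.inr (h h1 h2))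
          · exact Or.inr (Or.inl h2)
        · exact Or.inl h1⟩
      exact absurd (csInf_le hbdd hsS) (not_le.2 hs.2)
    -- helpful facts at interior points
    have hfacts : ∀ s ∈ Ioo tstar t₁,
        0 ≤ 4 * lam s / mu s ∧ 0 ≤ 3 * (v3 s + v0 s) / (2 * lam s * mu s) ∧
        0 ≤ 3 * (v3 s - v0 s) / (2 * lam s * mu s) ∧ F s ≤ C := by
      intro s hs
      obtain ⟨hl, hmu, hm3, hp3⟩ := hpos s (hIoi (hIcc (Ioo_subset_Icc_self hs)))
      refine ⟨by positivity, by positivity, by positivity, hC s (Ioo_subset_Icc_self hs)⟩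
    have hA0 : 0 < a0 t₁ := by
      have hk := key_mono (C := C) hts1 (fun s hsm => hsol0 s (hIcc hsm)) (fun s hs => by
        obtain ⟨hb, he1, he2, hFC⟩ := hfacts s hs
        obtain ⟨x1, x2, x3⟩ := hmid s hs
        have habs : 0 ≤ |phi s| := abs_nonneg _
        have hbC : 4 * lam s / mu s ≤ C := by simp only [hFdef] at hFC; linarith
        nlinarith [mul_nonneg (sub_nonneg.2 hbC) x1.le, mul_nonneg hb (mul_pos x2 x3).le])
      by_contra hcc
      push_neg at hcc
      nlinarith [Real.exp_pos (C * tstar), Real.exp_pos (C * t₁),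
        mul_pos (Real.exp_pos (C * tstar)) h0]
    have hAp : 0 < ap t₁ := by
      have hk := key_mono (C := C) hts1 (fun s hsm => hsolp s (hIcc hsm)) (fun s hs => by
        obtain ⟨hb, he1, he2, hFC⟩ := hfacts s hs
        obtain ⟨x1, x2, x3⟩ := hmid s hs
        have habs : phi s ≤ |phi s| := le_abs_self _
        have hbC : 3 * (v3 s + v0 s) / (2 * lam s * mu s) + 2 * phi s ≤ C := by
          simp only [hFdef] at hFC; linarith
        nlinarith [mul_nonneg (sub_nonneg.2 hbC) x2.le, mul_nonneg he1 (mul_pos x1 x3).le])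
      by_contra hcc
      push_neg at hcc
      nlinarith [Real.exp_pos (C * tstar), Real.exp_pos (C * t₁),
        mul_pos (Real.exp_pos (C * tstar)) hp]
    have hAm : 0 < am t₁ := by
      have hk := key_mono (C := C) hts1 (fun s hsm => hsolm s (hIcc hsm)) (fun s hs => by
        obtain ⟨hb, he1, he2, hFC⟩ := hfacts s hs
        obtain ⟨x1, x2, x3⟩ := hmid s hs
        have habs : -phi s ≤ |phi s| := neg_le_abs _
        have hbC : 3 * (v3 s - v0 s) / (2 * lam s * mu s) - 2 * phi s ≤ C := by
          simp only [hFdef] at hFC; linarith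
        nlinarith [mul_nonneg (sub_nonneg.2 hbC) x3.le, mul_nonneg he2 (mul_pos x1 x2).le])
      by_contra hcc
      push_neg at hcc
      nlinarith [Real.exp_pos (C * tstar), Real.exp_pos (C * t₁),
        mul_pos (Real.exp_pos (C * tstar)) hm]
    rcases ht₁mem.2 with h' | h' | h' <;> linarith
  -- Lemma A: phi stays above phi tstar
  have hg : ∀ s ∈ Ici tstar, HasDerivAt
      (fun u => 3*(((ap u^2 + am u^2)/2 - 1)*(lam u*v0 u) - (ap u^2 - am u^2)/2*(lam u*v3 u)))
      (6*lam s*phi s*(ap s^2*(v3 s - v0 s) + am s^2*(v3 s + v0 s))) s := by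
    intro s hs
    have hs0 := hIoi hs
    obtain ⟨hl, hmu, _, _⟩ := hpos s hs0
    exact hg_aux hl hmu (hsq s hs0) (hsolp s hs) (hsolm s hs) (hder3 s hs0) (hder0 s hs0)
  set g : ℝ → ℝ := fun u => 3*(((ap u^2 + am u^2)/2 - 1)*(lam u*v0 u) - (ap u^2 - am u^2)/2*(lam u*v3 u))
    with hgdef
  have hgid : ∀ s ∈ Ici tstar, lam s * mu s^2 * (3 / mu s ^ 2 *
      (((ap s ^ 2 + am s ^ 2) / 2 - 1) * v0 s - (ap s ^ 2 - am s ^ 2) / 2 * v3 s)) = g s := by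
    intro s hs
    have hmu := (hpos s (hIoi hs)).2.1
    have h : mu s ≠ 0 := hmu.ne'
    simp only [hgdef]
    field_simp
  have hgstar : 0 < g tstar := by
    have h1 : lam tstar * mu tstar^2 * deriv phi tstar = g tstar := by
      rw [(hsolphi tstar self_mem_Ici).deriv]
      exact hgid tstar self_mem_Ici
    rw [← h1]
    obtain ⟨hl, hmu, _, _⟩ := hpos tstar (hIoi self_mem_Ici)
    exact mul_pos (mul_pos hl (pow_pos hmu 2)) hph'
  have hphiA : ∀ s ∈ Ici tstar, phi tstar ≤ phi s := by
    by_contra hcon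
    push_neg at hcon
    obtain ⟨tb, htb, htb'⟩ := hcon
    set S2 := {s | s ∈ Ici tstar ∧ phi s < phi tstar} with hS2def
    have hS2ne : S2.Nonempty := ⟨tb, htb, htb'⟩
    have hbdd2 : BddBelow S2 := ⟨tstar, fun s hs => hs.1⟩
    set t₁ := sInf S2 with ht1def
    have hts1 : tstar ≤ t₁ := le_csInf hS2ne (fun s hs => hs.1)
    have hlow : ∀ s, tstar ≤ s → s < t₁ → phi tstar ≤ phi s := by
      intro s h1 h2
      by_contra hcc
      exact absurd (csInf_le hbdd2 ⟨h1, lt_of_not_ge hcc⟩) (not_le.2 h2)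
    have hget1 : phi tstar ≤ phi t₁ := by
      rcases eq_or_lt_of_le hts1 with he | hlt
      · rw [← he]
      · have htend : Tendsto phi (nhdsWithin t₁ (Iio t₁)) (nhds (phi t₁)) :=
          ((hsolphi t₁ hts1).continuousAt.tendsto).mono_left nhdsWithin_le_nhds
        refine ge_of_tendsto htend ?_
        filter_upwards [Ioo_mem_nhdsLT_of_mem (show t₁ ∈ Ioc tstar t₁ from ⟨hlt, le_refl t₁⟩)]
          with s hs
        exact hlow s hs.1.le hs.2
    have hphimid : ∀ s ∈ Icc tstar t₁, phi tstar ≤ phi s := by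
      intro s hs
      rcases eq_or_lt_of_le hs.2 with he | h
      · rw [he]; exact hget1
      · exact hlow s hs.1 h
    have hIcc1 : Icc tstar t₁ ⊆ Ici tstar := fun s hs => hs.1
    have hkm := key_mono (C := 0) hts1 (fun s hs => hg s (hIcc1 hs)) (fun s hs => by
      have hs' : s ∈ Icc tstar t₁ := Ioo_subset_Icc_self hs
      obtain ⟨hl, hmu, hm3, hp3⟩ := hpos s (hIoi (hIcc1 hs'))
      have hphis : 0 < phi s := lt_of_lt_of_le hph (hphimid s hs')
      have hsum : 0 ≤ ap s^2*(v3 s - v0 s) + am s^2*(v3 s + v0 s) := by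
        nlinarith [sq_nonneg (ap s), sq_nonneg (am s)]
      have h6 := mul_nonneg (mul_nonneg (mul_nonneg (by norm_num : (0:ℝ) ≤ 6) hl.le) hphis.le) hsum
      linarith [h6])
    simp only [zero_mul, Real.exp_zero, one_mul] at hkm
    obtain ⟨hl1, hmu1, _, _⟩ := hpos t₁ (hIoi hts1)
    have hg1 : 0 < g t₁ := lt_of_lt_of_le hgstar hkm
    have hid1 := hgid t₁ hts1
    have hD1 : 0 < 3 / mu t₁ ^ 2 *
        (((ap t₁ ^ 2 + am t₁ ^ 2) / 2 - 1) * v0 t₁ - (ap t₁ ^ 2 - am t₁ ^ 2) / 2 * v3 t₁) := by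
      by_contra hcc
      push_neg at hcc
      nlinarith [mul_nonpos_of_nonneg_of_nonpos (mul_pos hl1 (pow_pos hmu1 2)).le hcc]
    have hslope := (hasDerivAt_iff_tendsto_slope.1 (hsolphi t₁ hts1)).eventually
      (eventually_gt_nhds hD1)
    rw [eventually_nhdsWithin_iff, Metric.eventually_nhds_iff] at hslope
    obtain ⟨δ, hδ, hball⟩ := hslope
    obtain ⟨s, hsS, hslt⟩ := (csInf_lt_iff hbdd2 hS2ne).1
      (show sInf S2 < t₁ + δ by rw [← ht1def]; linarith)
    have hst : t₁ ≤ s := csInf_le hbdd2 hsS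
    have hsne : s ≠ t₁ := by
      intro h
      rw [h] at hsS
      exact absurd hget1 (not_le.2 hsS.2)
    have h2 : t₁ < s := lt_of_le_of_ne hst (Ne.symm hsne)
    have hd : dist s t₁ < δ := by
      rw [Real.dist_eq, abs_of_pos (by linarith)]
      linarith
    have hsl := hball hd hsne
    rw [slope_def_field] at hsl
    have h3 : 0 < s - t₁ := sub_pos.2 h2
    have h4 : 0 < phi s - phi t₁ := by
      have := mul_pos hsl h3
      rwa [div_mul_cancel₀ _ h3.ne'] at this
    have := hsS.2
    linarith [hget1]
  -- growth argument
  have hev : ∀ᶠ s in atTop, 3 * (v3 s - v0 s) / (2 * lam s * mu s) < phi tstar :=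
    hdecm.eventually (eventually_lt_nhds hph)
  obtain ⟨T0, hT0⟩ := eventually_atTop.1 hev
  set T := max tstar T0 with hTdef
  have hTt : tstar ≤ T := le_max_left _ _
  have hTmem : T ∈ Ici tstar := mem_Ici.2 hTt
  have hamT : 0 < am T := (hpos3 T hTmem).2.2
  have hMpos : 0 < M := lt_of_lt_of_le hamT (hM T hTmem)
  set X : ℝ := (M + 1) / (am T * phi tstar) with hXdef
  have hXpos : 0 < X := by
    apply div_pos (by linarith) (mul_pos hamT hph)
  set t₂ : ℝ := T + X with ht₂def
  have hTt₂ : T ≤ t₂ := by simp only [ht₂def]; linarith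
  have hIcc2 : Icc T t₂ ⊆ Ici tstar := fun s hs => mem_Ici.2 (le_trans hTt hs.1)
  have hkm2 := key_mono (C := -phi tstar) hTt₂ (fun s hs => hsolm s (hIcc2 hs)) (fun s hs => by
    have hsmem : s ∈ Ici tstar := hIcc2 (Ioo_subset_Icc_self hs)
    obtain ⟨hl, hmu, hm3, hp3⟩ := hpos s (hIoi hsmem)
    obtain ⟨x1, x2, x3⟩ := hpos3 s hsmem
    have hεnn : 0 ≤ 3 * (v3 s - v0 s) / (2 * lam s * mu s) := by positivity
    have hεlt : 3 * (v3 s - v0 s) / (2 * lam s * mu s) < phi tstar :=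
      hT0 s (le_trans (le_max_right _ _) hs.1.le)
    have hφs : phi tstar ≤ phi s := hphiA s hsmem
    nlinarith [mul_nonneg hεnn (mul_pos x1 x2).le,
      mul_nonneg (sub_nonneg.2 hεlt.le) x3.le,
      mul_nonneg (sub_nonneg.2 hφs) x3.le])
  -- turn into explicit growth
  have h5 : am T * Real.exp (phi tstar * X) ≤ am t₂ := by
    have h6 := mul_le_mul_of_nonneg_left hkm2 (Real.exp_pos (phi tstar * t₂)).le
    rw [← mul_assoc, ← mul_assoc, ← Real.exp_add, ← Real.exp_add] at h6
    have e1 : phi tstar * t₂ + -phi tstar * T = phi tstar * X := by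
      simp only [ht₂def]; ring
    have e2 : phi tstar * t₂ + -phi tstar * t₂ = 0 := by ring
    rw [e1, e2, Real.exp_zero, one_mul] at h6
    linarith [h6]
  have h7 : am T * (phi tstar * X) = M + 1 := by
    rw [hXdef]
    field_simp
  have h8 := Real.add_one_le_exp (phi tstar * X)
  have h9 := hM t₂ (hIcc2 (right_mem_Icc.2 hTt₂))
  nlinarith [mul_le_mul_of_nonneg_left h8 hamT.le]

theorem stenzel_monopole_blowup (lam mu v0 v3 a0 ap am phi : ℝ → ℝ)
    (hhypo : StenzelHypo lam mu v0 v3)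
    (hdecm : Tendsto (fun t => 3 * (v3 t - v0 t) / (2 * lam t * mu t)) atTop (nhds 0))
    (hdecp : Tendsto (fun t => 3 * (v3 t + v0 t) / (2 * lam t * mu t)) atTop (nhds 0))
    (tstar : ℝ) (hts : 0 < tstar)
    (hsol : IsSolStenzelMonopole lam mu v0 v3 a0 ap am phi (Ici tstar))
    (h0 : 0 < a0 tstar) (hp : 0 < ap tstar) (hm : 0 < am tstar) :
    ((0 < phi tstar ∧ 0 < deriv phi tstar) →
      ¬ ∃ M : ℝ, ∀ t ∈ Ici tstar, am t ≤ M) ∧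
    ((phi tstar < 0 ∧ deriv phi tstar < 0) →
      ¬ ∃ M : ℝ, ∀ t ∈ Ici tstar, ap t ≤ M) := by
  obtain ⟨hc1, hc2, hc3, hc4, hq, hd⟩ := hhypo
  have hclam : ContinuousOn lam (Ioi 0) := hc1.continuousOn
  have hcmu : ContinuousOn mu (Ioi 0) := hc2.continuousOn
  have hcv0 : ContinuousOn v0 (Ioi 0) := hc3.continuousOn
  have hcv3 : ContinuousOn v3 (Ioi 0) := hc4.continuousOn
  have hpos' : ∀ t ∈ Ioi (0:ℝ), 0 < lam t ∧ 0 < mu t ∧ 0 < v3 t - v0 t ∧ 0 < v3 t + v0 t :=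
    fun t ht => ⟨(hq t ht).1, (hq t ht).2.1, (hq t ht).2.2.1, (hq t ht).2.2.2.1⟩
  have hsq' : ∀ t ∈ Ioi (0:ℝ), mu t ^ 2 = v3 t ^ 2 - v0 t ^ 2 :=
    fun t ht => (hq t ht).2.2.2.2.2
  have hder3 : ∀ t ∈ Ioi (0:ℝ), HasDerivAt (fun s => lam s * v3 s) (3 * mu t) t :=
    fun t ht => (hd t ht).2.2.1
  have hder0 : ∀ t ∈ Ioi (0:ℝ), HasDerivAt (fun s => lam s * v0 s) 0 t :=
    fun t ht => (hd t ht).2.2.2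
  constructor
  · rintro ⟨hph, hph'⟩
    exact blowup_aux lam mu v0 v3 a0 ap am phi hclam hcmu hcv0 hcv3 hpos' hsq' hder3 hder0
      hdecm tstar hts (fun t ht => (hsol t ht).1) (fun t ht => (hsol t ht).2.1)
      (fun t ht => (hsol t ht).2.2.1) (fun t ht => (hsol t ht).2.2.2) h0 hp hm hph hph'
  · rintro ⟨hph, hph'⟩
    refine blowup_aux lam mu (fun t => -v0 t) v3 a0 am ap (fun t => -phi t) hclam hcmu
      hcv0.neg hcv3 ?_ ?_ hder3 ?_ ?_ tstar hts ?_ ?_ ?_ ?_ h0 hm hp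
      (neg_pos.mpr hph) ?_
    · intro t ht
      obtain ⟨x1, x2, x3, x4⟩ := hpos' t ht
      refine ⟨x1, x2, by simpa using x4, by show 0 < v3 t + -v0 t; linarith⟩
    · intro t ht
      have := hsq' t ht
      simp only [neg_sq]
      linarith
    · intro t ht
      have h := (hder0 t ht).fun_neg
      have he : (fun s => lam s * -v0 s) = fun s => -(lam s * v0 s) := by
        funext u; ring
      rw [he]
      simpa using h
    · have he : (fun t => 3 * (v3 t - -v0 t) / (2 * lam t * mu t))
          = fun t => 3 * (v3 t + v0 t) / (2 * lam t * mu t) := by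
        funext u; ring_nf
      rw [he]
      exact hdecp
    · intro t ht
      convert (hsol t ht).1 using 1
      ring
    · intro t ht
      convert (hsol t ht).2.2.1 using 1
      ring
    · intro t ht
      convert (hsol t ht).2.1 using 1
      ring
    · intro t ht
      have h := ((hsol t ht).2.2.2).fun_neg
      refine h.congr_deriv ?_
      symm
      ring
    · rw [deriv.fun_neg]
      linarith
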